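/- Let q(τ₁) ∈ Sⁿ⁻¹ be a solution of the Neumann system q'' = −A⁻¹q + λq with λ = (A⁻¹q, q) − (q', q') (so that (q,q) = 1 and (q,q') = 0 are preserved). Then the function F₀(q, q') = (Aq', q')(Aq, q) − (Aq, q')² − (Aq, q) is a first integral. -/

import Mathlib

/-!
Differentiating along the flow, `d/dt F₀ = 2 ((Aq',q'')(Aq,q) - (Aq,q')(Aq,q'') - (Aq,q'))`
by the symmetry of `A`. For `q'' = -A⁻¹q + λq` one has `Aq'' = -q + λAq`, so
`(Aq',q'') = λ(Aq,q') - (q,q')` and `(Aq,q'') = λ(Aq,q) - (q,q)`; on the sphere,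
where `(q,q) = 1` and `(q,q') = 0`, the terms in `λ` cancel and so do the remaining ones.
-/

open Matrix

variable {𝕜 ι : Type*} [NontriviallyNormedField 𝕜] [Fintype ι]

theorem HasDerivAt.dotProduct {f g : 𝕜 → ι → 𝕜} {f' g' : ι → 𝕜} {t : 𝕜}
    (hf : HasDerivAt f f' t) (hg : HasDerivAt g g' t) :
    HasDerivAt (fun s => f s ⬝ᵥ g s) (f' ⬝ᵥ g t + f t ⬝ᵥ g') t := by
  simp only [_root_.dotProduct, ← Finset.sum_add_distrib]
  exact HasDerivAt.fun_sum fun i _ => (hasDerivAt_pi.mp hf i).mul (hasDerivAt_pi.mp hg i)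

theorem HasDerivAt.matrix_mulVec {m : Type*} [Fintype m] (A : Matrix m ι 𝕜) {f : 𝕜 → ι → 𝕜}
    {f' : ι → 𝕜} {t : 𝕜} (hf : HasDerivAt f f' t) :
    HasDerivAt (fun s => A *ᵥ f s) (A *ᵥ f') t := by
  refine hasDerivAt_pi.mpr fun i => ?_
  simp only [mulVec, _root_.dotProduct]
  exact HasDerivAt.fun_sum fun j _ => (hasDerivAt_pi.mp hf j).const_mul _

theorem Matrix.IsSymm.mulVec_dotProduct_comm {A : Matrix ι ι 𝕜} (hA : A.IsSymm) (x y : ι → 𝕜) :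
    A *ᵥ x ⬝ᵥ y = A *ᵥ y ⬝ᵥ x := by
  rw [dotProduct_comm, dotProduct_mulVec, ← mulVec_transpose, hA.eq]

/-- The integral `F₀` of the Neumann system, with `v` in the role of `q'`. -/
def neumannF0 (A : Matrix ι ι 𝕜) (q v : ι → 𝕜) : 𝕜 :=
  (A *ᵥ v ⬝ᵥ v) * (A *ᵥ q ⬝ᵥ q) - (A *ᵥ q ⬝ᵥ v) ^ 2 - A *ᵥ q ⬝ᵥ q

theorem hasDerivAt_neumannF0 {A : Matrix ι ι 𝕜} (hA : A.IsSymm) {q v : 𝕜 → ι → 𝕜} {w : ι → 𝕜}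
    {t : 𝕜} (hq : HasDerivAt q (v t) t) (hv : HasDerivAt v w t) :
    HasDerivAt (fun s => neumannF0 A (q s) (v s))
      (2 * ((A *ᵥ v t ⬝ᵥ w) * (A *ᵥ q t ⬝ᵥ q t) - (A *ᵥ q t ⬝ᵥ v t) * (A *ᵥ q t ⬝ᵥ w)
        - A *ᵥ q t ⬝ᵥ v t)) t := by
  have hAqq := (hq.matrix_mulVec A).dotProduct hq
  have hAqv := (hq.matrix_mulVec A).dotProduct hv
  have hAvv := (hv.matrix_mulVec A).dotProduct hv
  refine (((hAvv.mul hAqq).sub (hAqv.pow 2)).sub hAqq).congr_deriv ?_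
  rw [hA.mulVec_dotProduct_comm w, hA.mulVec_dotProduct_comm (v t) (q t)]
  ring

theorem mulVec_neumann_field {A : Matrix ι ι 𝕜} [DecidableEq ι] (hA : IsUnit A.det) (c : 𝕜)
    (q : ι → 𝕜) : A *ᵥ (-(A⁻¹ *ᵥ q) + c • q) = -q + c • A *ᵥ q := by
  rw [mulVec_add, mulVec_neg, mulVec_smul, mulVec_mulVec, mul_nonsing_inv _ hA, one_mulVec]

theorem neumannF0_deriv_eq_zero {A : Matrix ι ι 𝕜} [DecidableEq ι] (hA : A.IsSymm)
    (hdet : IsUnit A.det) (c : 𝕜) {q v : ι → 𝕜} (hqq : q ⬝ᵥ q = 1) (hqv : q ⬝ᵥ v = 0) :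
    (A *ᵥ v ⬝ᵥ (-(A⁻¹ *ᵥ q) + c • q)) * (A *ᵥ q ⬝ᵥ q)
      - (A *ᵥ q ⬝ᵥ v) * (A *ᵥ q ⬝ᵥ (-(A⁻¹ *ᵥ q) + c • q)) - A *ᵥ q ⬝ᵥ v = 0 := by
  rw [hA.mulVec_dotProduct_comm v, hA.mulVec_dotProduct_comm q (-(A⁻¹ *ᵥ q) + c • q),
    mulVec_neumann_field hdet]
  simp only [neg_dotProduct, add_dotProduct, smul_dotProduct, smul_eq_mul, hqq, hqv,
    hA.mulVec_dotProduct_comm q v]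
  ring

theorem neumann_F0_integral_general (n : ℕ) (a : Fin n → ℝ) (ha : ∀ i, 0 < a i)
    (A : Matrix (Fin n) (Fin n) ℝ) (hA : A = Matrix.diagonal a)
    (q v : ℝ → Fin n → ℝ)
    (lam : ℝ → ℝ)
    (hq : ∀ t, HasDerivAt q (v t) t)
    (hv : ∀ t, HasDerivAt v (-(A⁻¹.mulVec (q t)) + lam t • q t) t)
    (hcon1 : ∀ t, q t ⬝ᵥ q t = 1) (hcon2 : ∀ t, q t ⬝ᵥ v t = 0) (t : ℝ) :
    HasDerivAt (fun s => (A.mulVec (v s) ⬝ᵥ v s) * (A.mulVec (q s) ⬝ᵥ q s) -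
      (A.mulVec (q s) ⬝ᵥ v s) ^ 2 - (A.mulVec (q s) ⬝ᵥ q s)) 0 t := by
  subst hA
  have hdet : IsUnit (diagonal a).det := by
    rw [det_diagonal, isUnit_iff_ne_zero]
    exact Finset.prod_ne_zero_iff.mpr fun i _ => (ha i).ne'
  have hF0 := hasDerivAt_neumannF0 (isSymm_diagonal a) (hq t) (hv t)
  rwa [neumannF0_deriv_eq_zero (isSymm_diagonal a) hdet (lam t) (hcon1 t) (hcon2 t),
    mul_zero] at hF0

/-- `F₀(q,q') = (Aq',q')(Aq,q) - (Aq,q')² - (Aq,q)` is a first integral of the Neumann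
system `q'' = -A⁻¹q + λq` on `Sⁿ⁻¹`, with `λ = (A⁻¹q,q) - (q',q')`. -/
theorem neumann_F0_integral (n : ℕ) (a : Fin n → ℝ) (ha : ∀ i, 0 < a i)
    (A : Matrix (Fin n) (Fin n) ℝ) (hA : A = Matrix.diagonal a)
    (q v : ℝ → Fin n → ℝ)
    (lam : ℝ → ℝ)
    (hlam : ∀ t, lam t = (A⁻¹.mulVec (q t) ⬝ᵥ q t) - (v t ⬝ᵥ v t))
    (hq : ∀ t, HasDerivAt q (v t) t)
    (hv : ∀ t, HasDerivAt v (-(A⁻¹.mulVec (q t)) + lam t • q t) t)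
    (hcon1 : ∀ t, q t ⬝ᵥ q t = 1) (hcon2 : ∀ t, q t ⬝ᵥ v t = 0) (t : ℝ) :
    HasDerivAt (fun s => (A.mulVec (v s) ⬝ᵥ v s) * (A.mulVec (q s) ⬝ᵥ q s) -
      (A.mulVec (q s) ⬝ᵥ v s) ^ 2 - (A.mulVec (q s) ⬝ᵥ q s)) 0 t :=
  neumann_F0_integral_general n a ha A hA q v lam hq hv hcon1 hcon2 t
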